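/- Let G be a group, let (H,<) be a left-ordered group admitting a cofinal central element, and let φ : G → H be a group homomorphism whose image φ(G) is cofinal in (H,<). Let ≺ be a left-ordering of G that is lexicographic with respect to the short exact sequence 1 → ker φ → G → φ(G) → 1, with φ(G) carrying the restriction of <; that is, for every g ∈ G with g ∉ ker φ, id ≺ g if and only if id < φ(g). Then the secret left-ordering c_≺ ∈ CO(G) is an accumulation point of CO_g(G): every open neighborhood of c_≺ in CO(G) contains a genuine circular ordering of G. -/

import Mathlib

/-!
Let `w > 1` be a cofinal central element of `H`. Every coset of `⟨w⟩` meets `[1, w)` exactly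
once, and ordering `G` lexicographically, first by the representative of `φ g` in `[1, w)` and
then by `≺`, gives a total order whose cyclic sign `c_w` is a left-invariant circular ordering:
left multiplication only rotates this order, moving a final segment to the front. For
`w = ζⁿ` with `n` large, on a fixed finite set this order is again a rotation of `≺` (the
elements with `φ g < 1` move to the end), so `c_w → c_≺`. If `φ(b)² < w < φ(b)⁴` then
`c_w(b⁻¹, 1, b) = 1` but `c_w(b⁻², 1, b²) = -1`, which is impossible for a secret left-ordering,
where `1 < b` forces `1 < b²`; since `φ(G)` is cofinal, such `w = ζⁿ` exist for arbitrarily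
large `n`.
-/

namespace Paper

variable {G : Type*} [Group G]

/-- A left-invariant circular ordering of a group `G`, as a function `G³ → {0, ±1} ⊆ ℤ`. -/
def IsCircOrd (c : G → G → G → ℤ) : Prop :=
  (∀ g₁ g₂ g₃ : G, c g₁ g₂ g₃ = 0 ↔ (g₁ = g₂ ∨ g₁ = g₃ ∨ g₂ = g₃)) ∧
  (∀ g₁ g₂ g₃ : G, c g₁ g₂ g₃ = 0 ∨ c g₁ g₂ g₃ = 1 ∨ c g₁ g₂ g₃ = -1) ∧
  (∀ g₁ g₂ g₃ g₄ : G, c g₂ g₃ g₄ - c g₁ g₃ g₄ + c g₁ g₂ g₄ - c g₁ g₂ g₃ = 0) ∧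
  (∀ g g₁ g₂ g₃ : G, c (g*g₁) (g*g₂) (g*g₃) = c g₁ g₂ g₃)

/-- The space CO(G) of circular orderings, topologized as a subspace of `ℤ^{G³}`
(all relevant values lie in the discrete set `{0,±1}`, and `ℤ` carries the discrete
topology, so this is the subspace topology from the product topology on `{0,±1}^{G³}`). -/
abbrev CircOrd (G : Type*) [Group G] := {c : G → G → G → ℤ // IsCircOrd c}

open Classical in
/-- The cocycle `f_c`: `f_c(g,h) = 0` if `g = 1` or `h = 1` or `c(1,g,gh) = 1`,
and `f_c(g,h) = 1` otherwise (i.e. when `gh = 1 ≠ g`, or `c(1,gh,g) = 1`). -/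
noncomputable def fc (c : G → G → G → ℤ) (g h : G) : ℤ :=
  if g = 1 ∨ h = 1 ∨ c 1 g (g*h) = 1 then 0 else 1

/-- Multiplication in the central extension `G̃_c = G × ℤ`:
`(g,n)(h,m) = (gh, n+m+f_c(g,h))`. -/
noncomputable def liftMul (c : G → G → G → ℤ) (x y : G × ℤ) : G × ℤ :=
  (x.1 * y.1, x.2 + y.2 + fc c x.1 y.1)

/-- Powers (with natural number exponents) in `G̃_c`. -/
noncomputable def liftPow (c : G → G → G → ℤ) (x : G × ℤ) : ℕ → G × ℤ
  | 0 => (1, 0)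
  | n+1 => liftMul c (liftPow c x n) x

/-- `[h]_c`: the unique integer `k` with `z_c^k ≤_c h <_c z_c^{k+1}`, where `<_c` is the
left-ordering of `G̃_c` with positive cone `{(g,n) : n ≥ 0} ∖ {(1,0)}` and `z_c = (1,1)`.
Since `z_c^k = (1,k)` and `f_c(g,g⁻¹) = 1` for `g ≠ 1`, this is exactly the second
coordinate of `h`. -/
def liftFloor (h : G × ℤ) : ℤ := h.2

/-- The translation number `r̃ot_c(h)` of `h ∈ G̃_c`: the limit of `[hⁿ]_c / n`
(`limUnder` picks out the limit when it exists). -/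
noncomputable def rotTilde (c : G → G → G → ℤ) (h : G × ℤ) : ℝ :=
  Filter.limUnder Filter.atTop (fun n : ℕ => (liftFloor (liftPow c h n) : ℝ) / (n : ℝ))

/-- The rotation number `rot_c(g) ∈ ℝ/ℤ`, computed using the lift `(g,0) ∈ G̃_c`
(it is independent of the choice of lift). -/
noncomputable def rotc (c : G → G → G → ℤ) (g : G) : AddCircle (1:ℝ) :=
  ((rotTilde c (g, 0) : ℝ) : AddCircle (1:ℝ))

/-- `τ_c(g,h) = r̃ot_c(g̃h̃) − r̃ot_c(g̃) − r̃ot_c(h̃)`, computed using the lifts `(g,0)`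
and `(h,0)` (it is independent of the choice of lifts). -/
noncomputable def tauc (c : G → G → G → ℤ) (g h : G) : ℝ :=
  rotTilde c (liftMul c (g,0) (h,0)) - rotTilde c (g,0) - rotTilde c (h,0)

/-- A positive cone of a group `G`: `P · P ⊆ P` and `P ∪ P⁻¹ = G ∖ {1}`.
It determines a left-ordering by `g < h` iff `g⁻¹h ∈ P`. -/
def IsPositiveCone (P : Set G) : Prop :=
  (∀ a ∈ P, ∀ b ∈ P, a * b ∈ P) ∧ (P ∪ P⁻¹ = {g : G | g ≠ 1})

/-- The left-ordering determined by a positive cone. -/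
def coneLt (P : Set G) (a b : G) : Prop := a⁻¹ * b ∈ P

open Classical in
/-- The secret left-ordering `c_<` determined by a positive cone `P`:
`c_<(a,b,c) = sign σ` where `σ` is the permutation sorting `(a,b,c)` into increasing
order, i.e. `c_< = 1` on positively cyclically ordered triples, `-1` on negatively
cyclically ordered triples, and `0` when the entries are not all distinct. -/
noncomputable def circOfCone (P : Set G) : G → G → G → ℤ := fun a b c =>
  if (coneLt P a b ∧ coneLt P b c) ∨ (coneLt P b c ∧ coneLt P c a) ∨
      (coneLt P c a ∧ coneLt P a b) then 1
  else if (coneLt P c b ∧ coneLt P b a) ∨ (coneLt P b a ∧ coneLt P a c) ∨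
      (coneLt P a c ∧ coneLt P c b) then -1
  else 0

/-- A circular ordering is a *secret left-ordering* if it is `c_<` for some
left-ordering `<` of `G`. -/
def IsSecret (c : G → G → G → ℤ) : Prop := ∃ P : Set G, IsPositiveCone P ∧ c = circOfCone P

open Filter Function Topology

section CyclicSign

variable {α : Type*} {r s : α → α → Prop} {a b c : α}

open Classical

noncomputable def cyc (r : α → α → Prop) (a b c : α) : ℤ :=
  if (r a b ∧ r b c) ∨ (r b c ∧ r c a) ∨ (r c a ∧ r a b) then 1
  else if (r c b ∧ r b a) ∨ (r b a ∧ r a c) ∨ (r a c ∧ r c b) then -1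
  else 0

theorem circOfCone_eq_cyc (P : Set G) : circOfCone P = cyc (coneLt P) := rfl

theorem cyc_rotate (r : α → α → Prop) (a b c : α) : cyc r a b c = cyc r b c a :=
  if_congr or_rotate rfl (if_congr or_rotate.symm rfl rfl)

theorem cyc_mem (r : α → α → Prop) (a b c : α) :
    cyc r a b c = 0 ∨ cyc r a b c = 1 ∨ cyc r a b c = -1 := by
  unfold cyc; split_ifs <;> simp

theorem cyc_eq_one (hab : r a b) (hbc : r b c) : cyc r a b c = 1 :=
  if_pos (Or.inl ⟨hab, hbc⟩)

theorem cyc_eq_neg_one [Std.Asymm r] (hab : r a b) (hbc : r b c) : cyc r b a c = -1 := by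
  simp [cyc, hab, hbc, asymm hab, asymm hbc]

theorem rel_or_rel_of_ne [Std.Trichotomous r] (h : a ≠ b) : r a b ∨ r b a :=
  (trichotomous_of r a b).imp_right (Or.resolve_left · h)

theorem ite_rel_add_ite_rel_swap [Std.Trichotomous r] [Std.Asymm r] (h : a ≠ b) :
    (if r a b then 1 else 0 : ℤ) + (if r b a then 1 else 0) = 1 := by
  rcases rel_or_rel_of_ne (r := r) h with h | h <;> simp [h, asymm h]

theorem cyc_eq_of_pairwise_ne [IsStrictTotalOrder α r] (hab : a ≠ b) (hbc : b ≠ c)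
    (hca : c ≠ a) :
    cyc r a b c = 2 * ((if r a b then 1 else 0) + (if r b c then 1 else 0) +
      (if r c a then 1 else 0)) - 3 := by
  rcases rel_or_rel_of_ne (r := r) hab with h₁ | h₁ <;>
    rcases rel_or_rel_of_ne (r := r) hbc with h₂ | h₂ <;>
    rcases rel_or_rel_of_ne (r := r) hca with h₃ | h₃
  case inl.inl.inl => exact absurd (_root_.trans (_root_.trans h₁ h₂) h₃) (irrefl _)
  case inr.inr.inr => exact absurd (_root_.trans (_root_.trans h₁ h₃) h₂) (irrefl _)
  all_goals simp [cyc, h₁, h₂, h₃, asymm h₁, asymm h₂, asymm h₃]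

variable [IsStrictTotalOrder α r]

theorem cyc_self_left (a c : α) : cyc r a a c = 0 := by
  simp +contextual [cyc, irrefl, asymm]

theorem cyc_self_right (a b : α) : cyc r a b b = 0 := by
  rw [cyc_rotate, cyc_self_left]

theorem cyc_self_mid (a b : α) : cyc r a b a = 0 := by
  rw [cyc_rotate, cyc_self_right]

theorem cyc_eq_zero_iff : cyc r a b c = 0 ↔ a = b ∨ a = c ∨ b = c := by
  refine ⟨fun h => ?_, ?_⟩
  · by_contra! hne
    rw [cyc_eq_of_pairwise_ne hne.1 hne.2.2 (Ne.symm hne.2.1)] at h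
    split_ifs at h <;> omega
  · rintro (rfl | rfl | rfl)
    exacts [cyc_self_left _ _, cyc_self_mid _ _, cyc_self_right _ _]

theorem cyc_swap (a b c : α) : cyc r b a c = -cyc r a b c := by
  by_cases hne : a = b ∨ a = c ∨ b = c
  · rw [cyc_eq_zero_iff.2 hne, cyc_eq_zero_iff.2 (by tauto), neg_zero]
  push Not at hne
  obtain ⟨hab, hac, hbc⟩ := hne
  rw [cyc_eq_of_pairwise_ne hab.symm hac (Ne.symm hbc),
    cyc_eq_of_pairwise_ne hab hbc (Ne.symm hac)]
  linarith [ite_rel_add_ite_rel_swap (r := r) hab, ite_rel_add_ite_rel_swap (r := r) hbc,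
    ite_rel_add_ite_rel_swap (r := r) hac]

theorem cyc_swap_right (a b c : α) : cyc r a c b = -cyc r a b c := by
  rw [cyc_rotate, cyc_swap, ← cyc_rotate]

theorem cyc_cocycle (a b c d : α) :
    cyc r b c d - cyc r a c d + cyc r a b d - cyc r a b c = 0 := by
  by_cases hab : a = b
  · subst hab; simp [cyc_self_left]
  by_cases hbc : b = c
  · subst hbc; simp [cyc_self_left, cyc_self_right]
  by_cases hcd : c = d
  · subst hcd; simp [cyc_self_right]
  by_cases hac : a = c
  · subst hac; rw [cyc_swap a b d]; simp [cyc_self_left, cyc_self_mid]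
  by_cases hbd : b = d
  · subst hbd; rw [cyc_swap_right a b c]; simp [cyc_self_mid, cyc_self_right]
  by_cases hda : d = a
  · subst hda; rw [cyc_rotate r d b c]; simp [cyc_self_mid]
  rw [cyc_eq_of_pairwise_ne hbc hcd (Ne.symm hbd), cyc_eq_of_pairwise_ne hac hcd hda,
    cyc_eq_of_pairwise_ne hab hbd hda, cyc_eq_of_pairwise_ne hab hbc (Ne.symm hac)]
  linarith [ite_rel_add_ite_rel_swap (r := r) hbd, ite_rel_add_ite_rel_swap (r := r) hac]

/-- If `s` is obtained from `r` on `S` by moving the final segment `B` to the front, the two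
orders have the same cyclic sign on `S`. -/
theorem cyc_eq_of_rotate [IsStrictTotalOrder α s] {S : Set α} (B : α → Prop)
    (same : ∀ x ∈ S, ∀ y ∈ S, (B x ↔ B y) → (s x y ↔ r x y))
    (cross : ∀ x ∈ S, ∀ y ∈ S, ¬B x → B y → r x y ∧ s y x)
    (ha : a ∈ S) (hb : b ∈ S) (hc : c ∈ S) : cyc s a b c = cyc r a b c := by
  by_cases hne : a = b ∨ a = c ∨ b = c
  · rw [cyc_eq_zero_iff.2 hne, cyc_eq_zero_iff.2 hne]
  push Not at hne
  obtain ⟨hab, hac, hbc⟩ := hne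
  -- the indicator of `s` differs from that of `r` by a coboundary, which cancels around a cycle
  have key : ∀ x ∈ S, ∀ y ∈ S, (if s x y then 1 else 0 : ℤ) =
      (if r x y then 1 else 0) + (if B x then 1 else 0) - (if B y then 1 else 0) := by
    intro x hx y hy
    by_cases hBx : B x <;> by_cases hBy : B y
    · simp [hBx, hBy, same x hx y hy (iff_of_true hBx hBy)]
    · obtain ⟨h, h'⟩ := cross y hy x hx hBy hBx
      simp [hBx, hBy, h', asymm h]
    · obtain ⟨h, h'⟩ := cross x hx y hy hBx hBy
      simp [hBx, hBy, h, asymm h']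
    · simp [hBx, hBy, same x hx y hy (iff_of_false hBx hBy)]
  rw [cyc_eq_of_pairwise_ne hab hbc (Ne.symm hac), cyc_eq_of_pairwise_ne hab hbc (Ne.symm hac),
    key a ha b hb, key b hb c hc, key c hc a ha]
  ring

end CyclicSign

theorem isStrictTotalOrder_invImage {α β : Type*} [LinearOrder β] {f : α → β}
    (hf : Injective f) : IsStrictTotalOrder α (InvImage (· < ·) f) where
  toTrichotomous := InvImage.trichotomous hf

theorem isCircOrd_cyc (r : G → G → Prop) [IsStrictTotalOrder G r]
    (hinv : ∀ g a b c : G, cyc r (g * a) (g * b) (g * c) = cyc r a b c) : IsCircOrd (cyc r) :=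
  ⟨fun _ _ _ => cyc_eq_zero_iff, cyc_mem r, cyc_cocycle, hinv⟩

section PositiveCone

variable {K : Type*} [Group K] {P : Set K} {g : K}

theorem IsPositiveCone.one_notMem (hP : IsPositiveCone P) : (1 : K) ∉ P := fun h =>
  (hP.2 ▸ Or.inl h : (1 : K) ∈ {g : K | g ≠ 1}) rfl

theorem IsPositiveCone.mem_or_inv_mem (hP : IsPositiveCone P) (hg : g ≠ 1) :
    g ∈ P ∨ g⁻¹ ∈ P :=
  (hP.2.symm ▸ hg : g ∈ P ∪ P⁻¹)

theorem coneLt_mul_left_iff {a b : K} : coneLt P (g * a) (g * b) ↔ coneLt P a b := by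
  simp [coneLt, mul_assoc]

theorem coneLt_one_left : coneLt P 1 g ↔ g ∈ P := by simp [coneLt]

theorem coneLt_inv_one : coneLt P g⁻¹ 1 ↔ g ∈ P := by simp [coneLt]

theorem IsPositiveCone.isStrictTotalOrder (hP : IsPositiveCone P) :
    IsStrictTotalOrder K (coneLt P) where
  irrefl a := by simpa [coneLt] using hP.one_notMem
  trans a b c hab hbc := by simpa [coneLt, mul_assoc] using hP.1 _ hab _ hbc
  trichotomous a b hab hba := by
    by_contra hne
    rcases hP.mem_or_inv_mem (mt inv_mul_eq_one.1 hne) with h | h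
    · exact hab h
    · exact hba (by simpa [coneLt] using h)

/-- Its `<` is `coneLt P` by definition, so hypotheses phrased with `coneLt P` apply to it. -/
noncomputable abbrev IsPositiveCone.linearOrder (hP : IsPositiveCone P) : LinearOrder K :=
  haveI := hP.isStrictTotalOrder
  haveI := Classical.decRel (coneLt P)
  linearOrderOfSTO (coneLt P)

theorem IsPositiveCone.mulLeftMono (hP : IsPositiveCone P) :
    letI := hP.linearOrder; MulLeftMono K :=
  ⟨fun g _ _ h => Or.imp (congrArg (g * ·)) coneLt_mul_left_iff.2 h⟩

theorem circOfCone_inv_one_self_eq_one_iff (hP : IsPositiveCone P) :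
    circOfCone P g⁻¹ 1 g = 1 ↔ g ∈ P := by
  have := hP.isStrictTotalOrder
  rw [circOfCone_eq_cyc]
  refine ⟨fun h => ?_, fun h => cyc_eq_one (coneLt_inv_one.2 h) (coneLt_one_left.2 h)⟩
  by_contra hg
  by_cases h1 : g = 1
  · subst h1; simp [cyc_self_left] at h
  · have hinv := (hP.mem_or_inv_mem h1).resolve_left hg
    rw [cyc_rotate, cyc_eq_neg_one (by simpa using coneLt_inv_one.2 hinv)
      (coneLt_one_left.2 hinv)] at h
    omega

end PositiveCone

theorem IsSecret.apply_inv_one_mul_self {c : G → G → G → ℤ} (hc : IsSecret c) {g : G}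
    (h : c g⁻¹ 1 g = 1) : c (g * g)⁻¹ 1 (g * g) = 1 := by
  obtain ⟨R, hR, rfl⟩ := hc
  rw [circOfCone_inv_one_self_eq_one_iff hR] at h ⊢
  exact hR.1 g h g h

section LeftOrdered

variable {H : Type*} [Group H] [LinearOrder H] [MulLeftMono H] {w a b c d v : H}

structure IsCofinalCentral (w : H) : Prop where
  commute : ∀ x, Commute w x
  one_lt : 1 < w
  exists_lt_pow : ∀ h : H, ∃ n : ℕ, h < w ^ n

theorem zpow_strictMono_of_one_lt (hw : 1 < w) : StrictMono (w ^ · : ℤ → H) :=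
  strictMono_int_of_lt_succ fun n => by
    simpa [zpow_add_one] using lt_mul_of_one_lt_right' (w ^ n) hw

theorem mul_lt_zpow_add (hcomm : ∀ x, Commute w x) {i j : ℤ} (ha : a < w ^ i) (hb : b < w ^ j) :
    a * b < w ^ (i + j) :=
  calc a * b < a * w ^ j := mul_lt_mul_right hb a
    _ = w ^ j * a := ((hcomm a).zpow_left j).eq.symm
    _ < w ^ j * w ^ i := mul_lt_mul_right ha _
    _ = w ^ (i + j) := by rw [← zpow_add, add_comm]

theorem zpow_add_le_mul (hcomm : ∀ x, Commute w x) {i j : ℤ} (ha : w ^ i ≤ a)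
    (hb : w ^ j ≤ b) : w ^ (i + j) ≤ a * b :=
  calc w ^ (i + j) = w ^ j * w ^ i := by rw [← zpow_add, add_comm]
    _ ≤ w ^ j * a := mul_le_mul_right ha _
    _ = a * w ^ j := ((hcomm a).zpow_left j).eq
    _ ≤ a * b := mul_le_mul_right hb a

theorem lt_mul_inv_iff_of_commute (hcomm : ∀ x, Commute w x) : a < w * c⁻¹ ↔ c * a < w := by
  rw [(hcomm c⁻¹).eq, ← mul_lt_mul_iff_left c, mul_inv_cancel_left]

theorem mul_inv_lt_iff_of_commute (hcomm : ∀ x, Commute w x) : w * c⁻¹ < a ↔ w < c * a := by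
  rw [(hcomm c⁻¹).eq, ← mul_lt_mul_iff_left c, mul_inv_cancel_left]

theorem inv_lt_inv_of_lt_of_commute (hcomm : ∀ x, Commute w x) (h : a < w) : w⁻¹ < a⁻¹ :=
  calc w⁻¹ = a⁻¹ * (w⁻¹ * a) := by rw [(hcomm a).inv_left.eq, inv_mul_cancel_left]
    _ < a⁻¹ * (w⁻¹ * w) := mul_lt_mul_right (mul_lt_mul_right h _) _
    _ = a⁻¹ := by rw [inv_mul_cancel, mul_one]

theorem lt_mul_of_inv_lt_inv_mul (hcomm : ∀ x, Commute w x) (h : w⁻¹ < a⁻¹ * b) :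
    a < w * b :=
  calc a = w * (a * w⁻¹) := by rw [← ((hcomm a).inv_left).eq, mul_inv_cancel_left]
    _ < w * (a * (a⁻¹ * b)) := mul_lt_mul_right (mul_lt_mul_right h a) w
    _ = w * b := by rw [mul_inv_cancel_left]

theorem exists_lt_pow_of_lt_zpow (hw : 1 < w) {k : ℤ} (h : a < w ^ k) : ∃ n : ℕ, a < w ^ n :=
  ⟨k.natAbs, h.trans_le <| by
    rw [← zpow_natCast]; exact (zpow_strictMono_of_one_lt hw).monotone Int.le_natAbs⟩

theorem exists_isCofinalCentral {z : H} (hz : ∀ h : H, Commute z h)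
    (hcof : ∀ h : H, ∃ m k : ℤ, z ^ m < h ∧ h < z ^ k) :
    ∃ ζ : H, IsCofinalCentral ζ := by
  have hz1 : z ≠ 1 := by
    rintro rfl
    obtain ⟨m, -, hm, -⟩ := hcof 1
    simp at hm
  rcases lt_or_gt_of_ne hz1 with hlt | hgt
  · refine ⟨z⁻¹, fun h => (hz h).inv_left, Left.one_lt_inv_iff.2 hlt, fun h => ?_⟩
    obtain ⟨-, k, -, hk⟩ := hcof h
    exact exists_lt_pow_of_lt_zpow (Left.one_lt_inv_iff.2 hlt) (by rwa [inv_zpow', neg_neg])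
  · refine ⟨z, hz, hgt, fun h => ?_⟩
    obtain ⟨-, k, -, hk⟩ := hcof h
    exact exists_lt_pow_of_lt_zpow hgt hk

namespace IsCofinalCentral

theorem pow_succ (hw : IsCofinalCentral w) (k : ℕ) : IsCofinalCentral (w ^ (k + 1)) where
  commute x := (hw.commute x).pow_left _
  one_lt := one_lt_pow' hw.one_lt k.succ_ne_zero
  exists_lt_pow h := (hw.exists_lt_pow h).imp fun n hn => by
    rw [← pow_mul]
    exact hn.trans_le (pow_le_pow_right' hw.one_lt.le (Nat.le_mul_of_pos_left n k.succ_pos))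

theorem exists_inv_pow_lt (hw : IsCofinalCentral w) (h : H) : ∃ n : ℕ, (w ^ n)⁻¹ < h := by
  obtain ⟨n, hn⟩ := hw.exists_lt_pow h⁻¹
  refine ⟨n, ?_⟩
  calc (w ^ n)⁻¹ = (w ^ n)⁻¹ * h * h⁻¹ := (mul_inv_cancel_right _ _).symm
    _ < (w ^ n)⁻¹ * h * w ^ n := mul_lt_mul_right hn _
    _ = h := by rw [((hw.commute h).pow_left n).inv_left.eq, inv_mul_cancel_right]

theorem eventually_inv_lt_and_lt (hw : IsCofinalCentral w) (h : H) :
    ∀ᶠ k : ℕ in atTop, (w ^ (k + 1))⁻¹ < h ∧ h < w ^ (k + 1) := by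
  obtain ⟨m, hm⟩ := hw.exists_inv_pow_lt h
  obtain ⟨n, hn⟩ := hw.exists_lt_pow h
  filter_upwards [eventually_ge_atTop (m + n)] with k hk
  have mono := (zpow_strictMono_of_one_lt hw.one_lt).monotone
  refine ⟨?_, hn.trans_le (pow_le_pow_right' hw.one_lt.le (by omega))⟩
  calc (w ^ (k + 1))⁻¹ = w ^ (-((k + 1 : ℕ) : ℤ)) := by rw [zpow_neg, zpow_natCast]
    _ ≤ w ^ (-(m : ℤ)) := mono (by omega)
    _ = (w ^ m)⁻¹ := by rw [zpow_neg, zpow_natCast]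
    _ < h := hm

theorem exists_zpow_le_lt (hw : IsCofinalCentral w) (h : H) :
    ∃ k : ℤ, w ^ k ≤ h ∧ h < w ^ (k + 1) := by
  have mono := zpow_strictMono_of_one_lt hw.one_lt
  obtain ⟨m, hm⟩ := hw.exists_inv_pow_lt h
  obtain ⟨n, hn⟩ := hw.exists_lt_pow h
  have bdd : ∀ k : ℤ, w ^ k ≤ h → k ≤ n := fun k hk =>
    (mono.lt_iff_lt.1 (hk.trans_lt (by rwa [zpow_natCast]))).le
  obtain ⟨k, hk, hmax⟩ := Int.exists_greatest_of_bdd ⟨n, bdd⟩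
    ⟨-m, by rw [zpow_neg, zpow_natCast]; exact hm.le⟩
  exact ⟨k, hk, not_le.1 fun h' => by linarith [hmax _ h']⟩

theorem exists_zpow_mul_mem_Ico (hw : IsCofinalCentral w) (h : H) :
    ∃ k : ℤ, w ^ k * h ∈ Set.Ico 1 w := by
  obtain ⟨k, hk, hk'⟩ := hw.exists_zpow_le_lt h
  refine ⟨-k, ?_, ?_⟩
  · have := mul_le_mul_right hk (w ^ (-k))
    rwa [← zpow_add, neg_add_cancel, zpow_zero] at this
  · have := mul_lt_mul_right hk' (w ^ (-k))
    rwa [← zpow_add, neg_add_cancel_left, zpow_one] at this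

end IsCofinalCentral

theorem eq_zero_of_zpow_mul_mem_Ico (hw : 1 < w) {k : ℤ} (hu : a ∈ Set.Ico 1 w)
    (hk : w ^ k * a ∈ Set.Ico 1 w) : k = 0 := by
  have mono := zpow_strictMono_of_one_lt hw
  by_contra hne
  rcases lt_or_gt_of_ne hne with hk0 | hk0
  · refine not_le.2 ?_ hk.1
    calc w ^ k * a < w ^ k * w := mul_lt_mul_right hu.2 _
      _ = w ^ (k + 1) := (zpow_add_one w k).symm
      _ ≤ w ^ (0 : ℤ) := mono.monotone (by omega)
      _ = 1 := zpow_zero w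
  · refine not_le.2 hk.2 ?_
    calc w = w ^ (1 : ℤ) := (zpow_one w).symm
      _ ≤ w ^ k := mono.monotone (by omega)
      _ = w ^ k * 1 := (mul_one _).symm
      _ ≤ w ^ k * a := mul_le_mul_right hu.1 _

/-- The representative of the coset `⟨w⟩ h` in the fundamental domain `[1, w)`. -/
noncomputable def fundRep (w h : H) : H :=
  w ^ (Classical.epsilon fun k : ℤ => w ^ k * h ∈ Set.Ico 1 w) * h

theorem fundRep_eq (hw : 1 < w) {k : ℤ} {h : H} (hk : w ^ k * h ∈ Set.Ico 1 w) :
    fundRep w h = w ^ k * h := by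
  have he := Classical.epsilon_spec (p := fun k : ℤ => w ^ k * h ∈ Set.Ico 1 w) ⟨k, hk⟩
  set e := Classical.epsilon fun k : ℤ => w ^ k * h ∈ Set.Ico 1 w
  have : k - e = 0 :=
    eq_zero_of_zpow_mul_mem_Ico hw he (by rwa [← mul_assoc, ← zpow_add, sub_add_cancel])
  rw [fundRep, show k = e by omega]

theorem fundRep_of_mem (hw : 1 < w) {h : H} (hh : h ∈ Set.Ico 1 w) : fundRep w h = h := by
  simpa using fundRep_eq hw (k := 0) (by simpa using hh)

theorem fundRep_of_mem_Ico_inv_one (hw : 1 < w) {h : H} (hh : h ∈ Set.Ico w⁻¹ 1) :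
    fundRep w h = w * h := by
  refine (fundRep_eq hw (k := 1) ⟨?_, ?_⟩).trans (by rw [zpow_one])
  · simpa using mul_le_mul_right hh.1 w
  · simpa using mul_lt_mul_right hh.2 w

theorem IsCofinalCentral.fundRep_mem (hw : IsCofinalCentral w) (h : H) :
    fundRep w h ∈ Set.Ico 1 w :=
  Classical.epsilon_spec (hw.exists_zpow_mul_mem_Ico h)

theorem IsCofinalCentral.fundRep_zpow_mul (hw : IsCofinalCentral w) (j : ℤ) (h : H) :
    fundRep w (w ^ j * h) = fundRep w h := by
  obtain ⟨e, he⟩ : ∃ e : ℤ, fundRep w h = w ^ e * h := ⟨_, rfl⟩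
  have hmem := hw.fundRep_mem h
  rw [he] at hmem ⊢
  rw [fundRep_eq hw.one_lt (k := e - j), ← mul_assoc, ← zpow_add, sub_add_cancel]
  rwa [← mul_assoc, ← zpow_add, sub_add_cancel]

theorem IsCofinalCentral.fundRep_mul (hw : IsCofinalCentral w) (a b : H) :
    fundRep w (a * b) = fundRep w (fundRep w a * fundRep w b) := by
  obtain ⟨i, hi⟩ : ∃ i : ℤ, fundRep w a = w ^ i * a := ⟨_, rfl⟩
  obtain ⟨j, hj⟩ : ∃ j : ℤ, fundRep w b = w ^ j * b := ⟨_, rfl⟩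
  have : fundRep w a * fundRep w b = w ^ (i + j) * (a * b) := by
    rw [hi, hj, zpow_add, mul_assoc, ← mul_assoc a, ← ((hw.commute a).zpow_left j).eq]
    simp only [mul_assoc]
  rw [this, hw.fundRep_zpow_mul]

theorem IsCofinalCentral.fundRep_mul_eq_ite (hw : IsCofinalCentral w) (a b : H) :
    fundRep w (a * b) = (if w ≤ fundRep w a * fundRep w b then w⁻¹ else 1) *
      (fundRep w a * fundRep w b) := by
  have hv := hw.fundRep_mem a
  have hd := hw.fundRep_mem b
  set v := fundRep w a
  set d := fundRep w b
  rw [hw.fundRep_mul]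
  split_ifs with h
  · refine (fundRep_eq hw.one_lt (k := -1) ⟨?_, ?_⟩).trans (by rw [zpow_neg_one])
    · simpa using mul_le_mul_right h w⁻¹
    · rw [zpow_neg_one, ← mul_lt_mul_iff_left w, mul_inv_cancel_left]
      calc v * d < v * w := mul_lt_mul_right hd.2 v
        _ = w * v := ((hw.commute v).eq).symm
        _ < w * w := mul_lt_mul_right hv.2 w
  · rw [one_mul]
    exact fundRep_of_mem hw.one_lt ⟨Left.one_le_mul hv.1 hd.1, not_le.1 h⟩

end LeftOrdered

section FundCirc

variable {H : Type*} [Group H] [LinearOrder H] (φ : G →* H) {w : H}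

noncomputable def fundKey (w : H) (a : G) : H ×ₗ G := toLex (fundRep w (φ a), a)

theorem fundKey_injective (w : H) : Injective (fundKey φ w) := fun _ _ h =>
  congrArg (fun x => (ofLex x).2) h

variable [LinearOrder G]

instance (w : H) : IsStrictTotalOrder G (InvImage (· < ·) (fundKey φ w)) :=
  isStrictTotalOrder_invImage (fundKey_injective φ w)

/-- The circular ordering `c_w` of `G`: the pullback under `φ` of the circular ordering of
`H / ⟨w⟩`, refined lexicographically on the fibres. -/
noncomputable def fundCirc (w : H) : G → G → G → ℤ :=
  cyc (InvImage (· < ·) (fundKey φ w))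

variable [MulLeftMono G] [MulLeftMono H]

theorem fundCirc_mul (hw : IsCofinalCentral w) (g a b c : G) :
    fundCirc φ w (g * a) (g * b) (g * c) = fundCirc φ w a b c := by
  set v := fundRep w (φ g)
  have hd := fun a => hw.fundRep_mem (φ a)
  -- left multiplication by `g` acts on `[1, w)` as the rotation `d ↦ v * d` reduced mod `w`
  have key : ∀ a, fundKey φ w (g * a) =
      toLex ((if w ≤ v * fundRep w (φ a) then w⁻¹ else 1) * (v * fundRep w (φ a)), g * a) :=
    fun a => by rw [fundKey, map_mul, hw.fundRep_mul_eq_ite]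
  have : IsStrictTotalOrder G (InvImage (· < ·) (fundKey φ w ∘ (g * ·))) :=
    isStrictTotalOrder_invImage ((fundKey_injective φ w).comp (mul_right_injective g))
  show cyc (InvImage (· < ·) (fundKey φ w ∘ (g * ·))) a b c = _
  refine cyc_eq_of_rotate (S := Set.univ) (fun a => w ≤ v * fundRep w (φ a)) ?_ ?_
    trivial trivial trivial
  · intro x _ y _ hxy
    simp only [InvImage, comp_apply]
    rw [key, key]
    simp only [fundKey, ← hxy, Prod.Lex.toLex_lt_toLex, mul_lt_mul_iff_left, mul_right_inj]
  · intro x _ y _ hx hy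
    simp only [InvImage, comp_apply]
    rw [key, key]
    simp only [fundKey, if_pos hy, if_neg hx]
    refine ⟨Prod.Lex.toLex_lt_toLex.2 (Or.inl ?_), Prod.Lex.toLex_lt_toLex.2 (Or.inl ?_)⟩
    · exact (mul_lt_mul_iff_left v).1 ((not_le.1 hx).trans_le hy)
    · rw [← mul_lt_mul_iff_left w, mul_inv_cancel_left, one_mul]
      calc v * fundRep w (φ y) < v * w := mul_lt_mul_right (hd y).2 v
        _ = w * v := ((hw.commute v).eq).symm
        _ ≤ w * (v * fundRep w (φ x)) :=
          mul_le_mul_right (le_mul_of_one_le_right' (hd x).1) w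

theorem isCircOrd_fundCirc (hw : IsCofinalCentral w) : IsCircOrd (fundCirc φ w) :=
  isCircOrd_cyc _ (fundCirc_mul φ hw)

theorem strictMono_toLex_map_self (hlex : ∀ g : G, φ g ≠ 1 → (1 < g ↔ 1 < φ g)) :
    StrictMono fun a : G => toLex (φ a, a) := by
  intro a b hab
  refine Prod.Lex.toLex_lt_toLex.2 ((eq_or_ne (φ a) (φ b)).elim (fun h => Or.inr ⟨h, hab⟩) ?_)
  intro hne
  have h1 : 1 < a⁻¹ * b := by simpa using mul_lt_mul_right hab a⁻¹
  have hker : φ (a⁻¹ * b) ≠ 1 := by simpa [inv_mul_eq_one] using hne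
  have := mul_lt_mul_right ((hlex _ hker).1 h1) (φ a)
  exact Or.inl (by simpa using this)

/-- On `S`, the order defining `c_w` is that of `G` with the elements of negative image moved to
the end. -/
theorem fundCirc_eq_cyc_of_bounded (hlex : ∀ g : G, φ g ≠ 1 → (1 < g ↔ 1 < φ g))
    (hcomm : ∀ x, Commute w x) (hw : 1 < w) {S : Set G}
    (hbd : ∀ e ∈ S, w⁻¹ ≤ φ e ∧ φ e < w)
    (hpair : ∀ e ∈ S, ∀ f ∈ S, w⁻¹ < (φ e)⁻¹ * φ f) {a b c : G} (ha : a ∈ S)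
    (hb : b ∈ S) (hc : c ∈ S) : fundCirc φ w a b c = cyc (· < ·) a b c := by
  have hlt : ∀ x y : G, x < y ↔ toLex (φ x, x) < toLex (φ y, y) := fun x y =>
    (strictMono_toLex_map_self φ hlex).lt_iff_lt.symm
  have rep : ∀ e ∈ S, fundRep w (φ e) = (if φ e < 1 then w else 1) * φ e := by
    intro e he
    split_ifs with h
    · exact fundRep_of_mem_Ico_inv_one hw ⟨(hbd e he).1, h⟩
    · rw [one_mul]; exact fundRep_of_mem hw ⟨not_lt.1 h, (hbd e he).2⟩
  refine (cyc_eq_of_rotate (fun e => φ e < 1) ?_ ?_ ha hb hc).symm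
  · intro x hx y hy hxy
    rw [hlt x y]
    simp only [InvImage, fundKey, rep x hx, rep y hy, ← hxy, Prod.Lex.toLex_lt_toLex,
      mul_lt_mul_iff_left, mul_right_inj]
  · intro x hx y hy hx' hy'
    simp only [InvImage, fundKey, rep x hx, rep y hy, if_pos hy', if_neg hx', one_mul, hlt y x]
    exact ⟨Prod.Lex.toLex_lt_toLex.2 (Or.inl (lt_mul_of_inv_lt_inv_mul hcomm (hpair x hx y hy))),
      Prod.Lex.toLex_lt_toLex.2 (Or.inl (hy'.trans_le (not_lt.1 hx')))⟩

theorem eventually_fundCirc_eq (hlex : ∀ g : G, φ g ≠ 1 → (1 < g ↔ 1 < φ g)) {ζ : H}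
    (hζ : IsCofinalCentral ζ) (a b c : G) :
    ∀ᶠ n : ℕ in atTop, fundCirc φ (ζ ^ (n + 1)) a b c = cyc (· < ·) a b c := by
  have hS : ({a, b, c} : Set G).Finite := Set.toFinite _
  filter_upwards [hS.eventually_all.2 fun e _ => hζ.eventually_inv_lt_and_lt (φ e),
    hS.eventually_all.2 fun e _ => hS.eventually_all.2 fun f _ =>
      hζ.eventually_inv_lt_and_lt ((φ e)⁻¹ * φ f)] with n hbd hpair
  exact fundCirc_eq_cyc_of_bounded φ hlex (hζ.pow_succ n).commute (hζ.pow_succ n).one_lt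
    (fun e he => ⟨(hbd e he).1.le, (hbd e he).2⟩) (fun e he f hf => (hpair e he f hf).1)
    (by simp) (by simp) (by simp)

end FundCirc

section Genuine

variable {H : Type*} [Group H] [LinearOrder H] [MulLeftMono H] [LinearOrder G]
  (φ : G →* H) {w : H}

theorem not_isSecret_fundCirc (hcomm : ∀ x, Commute w x) {b : G} (hb : 1 < φ b)
    (h2 : φ b * φ b < w) (h4 : w < φ b * φ b * (φ b * φ b)) : ¬IsSecret (fundCirc φ w) := by
  intro hsec
  set p := φ b
  have hp2 : 1 < p * p := Left.one_lt_mul' hb hb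
  have hw : 1 < w := hp2.trans h2
  have hpw : p < w := (lt_mul_of_one_lt_right' p hb).trans h2
  have rep_one : fundRep w (φ 1) = 1 := by rw [map_one]; exact fundRep_of_mem hw ⟨le_rfl, hw⟩
  have rep_p : fundRep w p = p := fundRep_of_mem hw ⟨hb.le, hpw⟩
  have rep_p2 : fundRep w (p * p) = p * p := fundRep_of_mem hw ⟨hp2.le, h2⟩
  have rep_inv : ∀ {q : H}, 1 < q → q < w → fundRep w q⁻¹ = w * q⁻¹ := fun h1 h2 =>
    fundRep_of_mem_Ico_inv_one hw
      ⟨(inv_lt_inv_of_lt_of_commute hcomm h2).le, Left.inv_lt_one_iff.2 h1⟩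
  have key_lt : ∀ {x y : G}, fundRep w (φ x) < fundRep w (φ y) →
      InvImage (· < ·) (fundKey φ w) x y := fun h => Prod.Lex.toLex_lt_toLex.2 (Or.inl h)
  have v1 : fundCirc φ w b⁻¹ 1 b = 1 := by
    rw [fundCirc, cyc_rotate]
    refine cyc_eq_one (key_lt ?_) (key_lt ?_)
    · rwa [rep_one, rep_p]
    · rw [rep_p, map_inv, rep_inv hb hpw]
      exact (lt_mul_inv_iff_of_commute hcomm).2 h2
  have v2 : fundCirc φ w (b * b)⁻¹ 1 (b * b) = -1 := by
    refine cyc_eq_neg_one (key_lt ?_) (key_lt ?_)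
    · rw [rep_one, map_inv, map_mul, rep_inv hp2 h2]
      exact (lt_mul_inv_iff_of_commute hcomm).2 (by rwa [mul_one])
    · rw [map_inv, map_mul, rep_inv hp2 h2, rep_p2]
      exact (mul_inv_lt_iff_of_commute hcomm).2 h4
  have := hsec.apply_inv_one_mul_self v1
  rw [v2] at this
  omega

theorem frequently_not_isSecret_fundCirc {ζ : H} (hζ : IsCofinalCentral ζ)
    (himg : ∀ h : H, ∃ b : G, h < φ b) :
    ∃ᶠ n : ℕ in atTop, ¬IsSecret (fundCirc φ (ζ ^ (n + 1))) := by
  have mono := zpow_strictMono_of_one_lt hζ.one_lt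
  refine frequently_atTop.2 fun N => ?_
  obtain ⟨b, hb⟩ := himg (ζ ^ (N + 2))
  obtain ⟨s, hs, hs'⟩ := hζ.exists_zpow_le_lt (φ b)
  have hsN : (N : ℤ) + 2 ≤ s := by
    have : ζ ^ ((N + 2 : ℕ) : ℤ) < ζ ^ (s + 1) := by rw [zpow_natCast]; exact hb.trans hs'
    have := mono.lt_iff_lt.1 this
    omega
  -- `s ≥ 2` puts `w = ζ ^ (2 s + 2)` strictly between `(φ b)²` and `(φ b)⁴`
  refine ⟨(2 * s + 1).toNat, by omega, ?_⟩
  rw [← zpow_natCast, show (((2 * s + 1).toNat + 1 : ℕ) : ℤ) = (s + 1) + (s + 1) by omega]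
  have hs2 : ζ ^ (s + s) ≤ φ b * φ b := zpow_add_le_mul hζ.commute hs hs
  refine not_isSecret_fundCirc φ (fun x => (hζ.commute x).zpow_left _) ?_
    (mul_lt_zpow_add hζ.commute hs' hs') ?_
  · calc 1 = ζ ^ (0 : ℤ) := (zpow_zero ζ).symm
      _ < ζ ^ s := mono (by omega)
      _ ≤ φ b := hs
  · calc ζ ^ ((s + 1) + (s + 1)) < ζ ^ ((s + s) + (s + s)) := mono (by omega)
      _ ≤ _ := zpow_add_le_mul hζ.commute hs2 hs2

end Genuine

theorem tendsto_circOrd_iff {ι : Type*} {l : Filter ι} {d : ι → CircOrd G} {c : CircOrd G} :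
    Tendsto d l (𝓝 c) ↔ ∀ a b e : G, ∀ᶠ i in l, (d i).1 a b e = c.1 a b e := by
  simp only [tendsto_subtype_rng, tendsto_pi_nhds, nhds_discrete, tendsto_pure]

/-- Proposition 6.3: let `(H,<)` be a left-ordered group (ordering given by the cone `P`)
admitting a cofinal central element, and let `φ : G → H` be a homomorphism with cofinal
image.  If `≺` (with cone `Q`) is a left-ordering of `G` lexicographic with respect to
`1 → ker φ → G → φ(G) → 1` (i.e. for `g ∉ ker φ`, `id ≺ g` iff `id < φ(g)`), then the
secret left-ordering `c_≺` is an accumulation point of the genuine circular orderings: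
every open neighbourhood of it contains a genuine circular ordering of `G`. -/
theorem stmt17 {H : Type*} [Group H] (P : Set H) (hP : IsPositiveCone P)
    (z : H) (hzcentral : ∀ h : H, z * h = h * z)
    (hzcofinal : ∀ h : H, ∃ m k : ℤ, coneLt P (z ^ m) h ∧ coneLt P h (z ^ k))
    (φ : G →* H)
    (himgcofinal : ∀ h : H, ∃ a b : G, coneLt P (φ a) h ∧ coneLt P h (φ b))
    (Q : Set G) (hQ : IsPositiveCone Q)
    (hlex : ∀ g : G, φ g ≠ 1 → (g ∈ Q ↔ φ g ∈ P)) :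
    ∀ csec : CircOrd G, csec.1 = circOfCone Q →
      ∀ U : Set (CircOrd G), IsOpen U → csec ∈ U →
        ∃ d : CircOrd G, d ∈ U ∧ ¬ IsSecret d.1 := by
  intro csec hcsec U hU hcU
  let := hP.linearOrder
  let := hQ.linearOrder
  have := hP.mulLeftMono
  have := hQ.mulLeftMono
  obtain ⟨ζ, hζ⟩ := exists_isCofinalCentral hzcentral hzcofinal
  have hlex' : ∀ g : G, φ g ≠ 1 → (1 < g ↔ 1 < φ g) := fun g hg =>
    coneLt_one_left.trans ((hlex g hg).trans coneLt_one_left.symm)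
  have himg : ∀ h : H, ∃ b : G, h < φ b := fun h => by
    obtain ⟨-, b, -, hb⟩ := himgcofinal h
    exact ⟨b, hb⟩
  let d : ℕ → CircOrd G := fun n =>
    ⟨fundCirc φ (ζ ^ (n + 1)), isCircOrd_fundCirc φ (hζ.pow_succ n)⟩
  have hd : Tendsto d atTop (𝓝 csec) := tendsto_circOrd_iff.2 fun a b c => by
    rw [hcsec]
    exact eventually_fundCirc_eq φ hlex' hζ a b c
  obtain ⟨n, hgen, hnU⟩ := ((frequently_not_isSecret_fundCirc φ hζ himg).and_eventually
    (hd.eventually_mem (hU.mem_nhds hcU))).exists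
  exact ⟨d n, hnU, hgen⟩

end Paper
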